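/- Let H be a Hilbert space and H_1, ..., H_n closed subspaces of H whose system possesses the inverse best approximation property. For each i = 1, ..., n let {v^{(i)}_α : α ∈ M_i} be a Riesz family of elements of H_i. Then the combined family {v^{(i)}_α : i = 1, ..., n, α ∈ M_i} (indexed by the disjoint union of the M_i) is a Riesz family in H. -/

import Mathlib

noncomputable def orthProjCLM {𝕜 H : Type*} [RCLike 𝕜] [NormedAddCommGroup H]
    [InnerProductSpace 𝕜 H] [CompleteSpace H] (K : Submodule 𝕜 H)
    (hK : IsClosed (K : Set H)) : H →L[𝕜] H :=
  haveI : CompleteSpace K := hK.completeSpace_coe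
  K.subtypeL.comp (K.orthogonalProjection)

/-- The system of closed subspaces `K 0, ..., K (n-1)` possesses the
inverse best approximation property: for arbitrary `x i ∈ K i` there is `y`
whose orthogonal projection onto each `K i` equals `x i`. -/
def IBAP {𝕜 H : Type*} [RCLike 𝕜] [NormedAddCommGroup H] [InnerProductSpace 𝕜 H]
    [CompleteSpace H] {n : ℕ} (K : Fin n → Submodule 𝕜 H)
    (hK : ∀ i, IsClosed ((K i : Set H))) : Prop :=
  ∀ x : Fin n → H, (∀ i, x i ∈ K i) →
    ∃ y : H, ∀ i, orthProjCLM (K i) (hK i) y = x i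


/-- A family `v : M → H` is a Riesz family. -/
def IsRieszFamily (𝕜 : Type*) {H : Type*} [RCLike 𝕜] [NormedAddCommGroup H]
    [InnerProductSpace 𝕜 H] {M : Type*} (v : M → H) : Prop :=
  ∃ ε : ℝ, 0 < ε ∧ ∃ C : ℝ, 0 < C ∧ ∀ (F : Finset M) (a : M → 𝕜),
    ε * Real.sqrt (∑ α ∈ F, ‖a α‖ ^ 2) ≤ ‖∑ α ∈ F, a α • v α‖ ∧
    ‖∑ α ∈ F, a α • v α‖ ≤ C * Real.sqrt (∑ α ∈ F, ‖a α‖ ^ 2)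

/-! By the IBAP the map `y ↦ (P_k y)_k` from `H` onto `Π k, H_k` is surjective, so by the open
mapping theorem every `(x_k)` has a preimage `y` with `‖y‖ ≤ c (∑ ‖x_k‖²)^{1/2}`. As
`⟪y, x_k⟫ = ‖x_k‖²`, pairing `y` with `∑ x_k` gives `(∑ ‖x_k‖²)^{1/2} ≤ c ‖∑ x_k‖`. Applied to
the partial sums `x_k = ∑_{α ∈ M_k} a_α v^{(k)}_α`, this turns the lower Riesz bounds of the
pieces into one for the combined family; the upper bound is the triangle inequality. -/

open scoped InnerProductSpace
open Finset Filter Topology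

section

variable {𝕜 H : Type*} [RCLike 𝕜] [NormedAddCommGroup H] [InnerProductSpace 𝕜 H]

theorem isRieszFamily_of_bounds {M : Type*} {v : M → H} {ε C : ℝ} (hε : 0 < ε)
    (h : ∀ (F : Finset M) (a : M → 𝕜),
      ε * √(∑ α ∈ F, ‖a α‖ ^ 2) ≤ ‖∑ α ∈ F, a α • v α‖ ∧
      ‖∑ α ∈ F, a α • v α‖ ≤ C * √(∑ α ∈ F, ‖a α‖ ^ 2)) :
    IsRieszFamily 𝕜 v :=
  ⟨ε, hε, max C 1, by positivity, fun F a =>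
    ⟨(h F a).1, (h F a).2.trans (by gcongr; exact le_max_left C 1)⟩⟩

theorem exists_uniform_riesz_bounds {ι : Type*} [Finite ι] {M : ι → Type*}
    {v : ∀ i, M i → H} (h : ∀ i, IsRieszFamily 𝕜 (v i)) :
    ∃ ε > 0, ∃ C > 0, ∀ i (F : Finset (M i)) (a : M i → 𝕜),
      ε * √(∑ α ∈ F, ‖a α‖ ^ 2) ≤ ‖∑ α ∈ F, a α • v i α‖ ∧
      ‖∑ α ∈ F, a α • v i α‖ ≤ C * √(∑ α ∈ F, ‖a α‖ ^ 2) := by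
  choose ε hε C hC hb using h
  obtain ⟨ε₀, hε₀, hε₀_pos⟩ :=
    ((eventually_all.2 fun i => nhdsWithin_le_nhds (eventually_lt_nhds (hε i))).and
      (self_mem_nhdsWithin : Set.Ioi (0 : ℝ) ∈ 𝓝[>] 0)).exists
  obtain ⟨C₀, hC₀, hC₀_pos⟩ :=
    ((eventually_all.2 fun i => eventually_ge_atTop (C i)).and (eventually_gt_atTop 0)).exists
  refine ⟨ε₀, hε₀_pos, C₀, hC₀_pos, fun i F a => ⟨?_, ?_⟩⟩
  · exact (mul_le_mul_of_nonneg_right (hε₀ i).le (Real.sqrt_nonneg _)).trans (hb i F a).1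
  · exact (hb i F a).2.trans (mul_le_mul_of_nonneg_right (hC₀ i) (Real.sqrt_nonneg _))

theorem Finset.sum_sigma_preimage_mk {ι : Type*} [Fintype ι] {M : ι → Type*} {β : Type*}
    [AddCommMonoid β] (F : Finset (Σ i, M i)) (f : (Σ i, M i) → β) :
    ∑ p ∈ F, f p = ∑ i, ∑ α ∈ F.preimage (Sigma.mk i) sigma_mk_injective.injOn, f ⟨i, α⟩ := by
  classical
  rw [← sum_sigma, sigma_preimage_mk_of_subset F (subset_univ _)]

theorem isRieszFamily_sigma {ι : Type*} [Fintype ι] {M : ι → Type*} {K : ι → Submodule 𝕜 H}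
    {v : ∀ i, M i → H} (hv : ∀ i α, v i α ∈ K i) {c : ℝ} (hc : 0 < c)
    (hstable : ∀ x : ι → H, (∀ i, x i ∈ K i) → √(∑ i, ‖x i‖ ^ 2) ≤ c * ‖∑ i, x i‖)
    (hRiesz : ∀ i, IsRieszFamily 𝕜 (v i)) :
    IsRieszFamily 𝕜 (fun p : Σ i, M i => v p.1 p.2) := by
  obtain ⟨ε, hε, C, hC, hb⟩ := exists_uniform_riesz_bounds hRiesz
  refine isRieszFamily_of_bounds (div_pos hε hc) (C := Fintype.card ι * C) fun F a => ?_
  rw [F.sum_sigma_preimage_mk (fun p => ‖a p‖ ^ 2), F.sum_sigma_preimage_mk]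
  set G := fun i => F.preimage (Sigma.mk i) sigma_mk_injective.injOn
  set S := fun i => ∑ α ∈ G i, ‖a ⟨i, α⟩‖ ^ 2
  set x := fun i => ∑ α ∈ G i, a ⟨i, α⟩ • v i α
  have hS_nonneg (i : ι) : 0 ≤ S i := sum_nonneg fun _ _ => sq_nonneg _
  have hS_le (i : ι) : S i ≤ ∑ j, S j := single_le_sum (fun j _ => hS_nonneg j) (mem_univ i)
  have hb' (i : ι) := hb i (G i) fun α => a ⟨i, α⟩
  constructor
  · have hsq (i : ι) : ε ^ 2 * S i ≤ ‖x i‖ ^ 2 := by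
      have := pow_le_pow_left₀ (by positivity) (hb' i).1 2
      rwa [mul_pow, Real.sq_sqrt (hS_nonneg i)] at this
    rw [div_mul_eq_mul_div, div_le_iff₀' hc]
    calc ε * √(∑ i, S i) = √(∑ i, ε ^ 2 * S i) := by
          rw [← mul_sum, Real.sqrt_mul (sq_nonneg ε), Real.sqrt_sq hε.le]
      _ ≤ √(∑ i, ‖x i‖ ^ 2) := Real.sqrt_le_sqrt (sum_le_sum fun i _ => hsq i)
      _ ≤ c * ‖∑ i, x i‖ :=
          hstable x fun i => Submodule.sum_mem _ fun α _ => (K i).smul_mem _ (hv i α)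
  · calc ‖∑ i, x i‖ ≤ ∑ i, ‖x i‖ := norm_sum_le _ _
      _ ≤ ∑ _i : ι, C * √(∑ j, S j) :=
          sum_le_sum fun i _ => (hb' i).2.trans (by gcongr; exact hS_le i)
      _ = Fintype.card ι * C * √(∑ j, S j) := by
          rw [sum_const, card_univ, nsmul_eq_mul, mul_assoc]

end

section

variable {𝕜 H : Type*} [RCLike 𝕜] [NormedAddCommGroup H] [InnerProductSpace 𝕜 H]
  [CompleteSpace H]

theorem orthProjCLM_eq_starProjection {K : Submodule 𝕜 H} (hK : IsClosed (K : Set H)) :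
    haveI : CompleteSpace K := hK.completeSpace_coe
    orthProjCLM K hK = K.starProjection :=
  rfl

theorem inner_eq_norm_sq_of_orthProjCLM_eq {K : Submodule 𝕜 H} (hK : IsClosed (K : Set H))
    {x y : H} (hx : x ∈ K) (hy : orthProjCLM K hK y = x) : ⟪y, x⟫_𝕜 = (‖x‖ : 𝕜) ^ 2 := by
  have : CompleteSpace K := hK.completeSpace_coe
  rw [orthProjCLM_eq_starProjection] at hy
  calc ⟪y, x⟫_𝕜 = ⟪y, K.starProjection x⟫_𝕜 := by rw [K.starProjection_eq_self_iff.2 hx]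
    _ = ⟪x, x⟫_𝕜 := by rw [← K.inner_starProjection_left_eq_right, hy]
    _ = (‖x‖ : 𝕜) ^ 2 := inner_self_eq_norm_sq_to_K x

theorem IBAP.exists_preimage_norm_le {n : ℕ} {K : Fin n → Submodule 𝕜 H}
    {hK : ∀ i, IsClosed (K i : Set H)} (h : IBAP K hK) :
    ∃ c > 0, ∀ x : Fin n → H, (∀ i, x i ∈ K i) →
      ∃ y, (∀ i, orthProjCLM (K i) (hK i) y = x i) ∧ ‖y‖ ≤ c * √(∑ i, ‖x i‖ ^ 2) := by
  have (i : Fin n) : CompleteSpace (K i) := (hK i).completeSpace_coe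
  let T : H →L[𝕜] ∀ i, K i := ContinuousLinearMap.pi fun i => (K i).orthogonalProjectionOnto
  have hT (y : H) (i : Fin n) : (T y i : H) = orthProjCLM (K i) (hK i) y := rfl
  have hT_surj : Function.Surjective T := fun z => by
    obtain ⟨y, hy⟩ := h (fun i => z i) fun i => (z i).2
    exact ⟨y, funext fun i => Subtype.ext ((hT y i).trans (hy i))⟩
  obtain ⟨c, hc, hpre⟩ := T.exists_preimage_norm_le hT_surj
  refine ⟨c, hc, fun x hx => ?_⟩
  obtain ⟨y, hy, hy_norm⟩ := hpre fun i => ⟨x i, hx i⟩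
  refine ⟨y, fun i => (hT y i).symm.trans (congrArg Subtype.val (congrFun hy i)), ?_⟩
  refine hy_norm.trans (mul_le_mul_of_nonneg_left ?_ hc.le)
  refine (pi_norm_le_iff_of_nonneg (Real.sqrt_nonneg _)).2 fun i => Real.le_sqrt_of_sq_le ?_
  exact single_le_sum (f := fun j => ‖x j‖ ^ 2) (fun j _ => sq_nonneg _) (mem_univ i)

theorem IBAP.exists_sqrt_sum_norm_sq_le {n : ℕ} {K : Fin n → Submodule 𝕜 H}
    {hK : ∀ i, IsClosed (K i : Set H)} (h : IBAP K hK) :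
    ∃ c > 0, ∀ x : Fin n → H, (∀ i, x i ∈ K i) → √(∑ i, ‖x i‖ ^ 2) ≤ c * ‖∑ i, x i‖ := by
  obtain ⟨c, hc, hpre⟩ := h.exists_preimage_norm_le
  refine ⟨c, hc, fun x hx => ?_⟩
  obtain ⟨y, hy, hy_norm⟩ := hpre x hx
  set s := √(∑ i, ‖x i‖ ^ 2)
  have hs_sq : s ^ 2 ≤ s * (c * ‖∑ i, x i‖) := calc
    s ^ 2 = RCLike.re ⟪y, ∑ i, x i⟫_𝕜 := by
      simp only [s, inner_sum, map_sum, inner_eq_norm_sq_of_orthProjCLM_eq (hK _) (hx _) (hy _)]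
      rw [Real.sq_sqrt (sum_nonneg fun _ _ => sq_nonneg _)]
      norm_cast
    _ ≤ ‖y‖ * ‖∑ i, x i‖ := re_inner_le_norm _ _
    _ ≤ c * s * ‖∑ i, x i‖ := by gcongr
    _ = s * (c * ‖∑ i, x i‖) := by ring
  have hbound_nonneg : 0 ≤ c * ‖∑ i, x i‖ := by positivity
  nlinarith [Real.sqrt_nonneg (∑ i, ‖x i‖ ^ 2)]

end

/-- if the system `K` has the IBAP and each `v i` is a Riesz
family in `K i`, then the combined family is a Riesz family. -/
theorem stmt_11 {𝕜 H : Type*} [RCLike 𝕜] [NormedAddCommGroup H]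
    [InnerProductSpace 𝕜 H] [CompleteSpace H] {n : ℕ}
    (K : Fin n → Submodule 𝕜 H) (hK : ∀ i, IsClosed ((K i : Set H)))
    (hIBAP : IBAP K hK)
    (M : Fin n → Type*) (v : ∀ i, M i → H)
    (hv : ∀ i α, v i α ∈ K i)
    (hRiesz : ∀ i, IsRieszFamily 𝕜 (v i)) :
    IsRieszFamily 𝕜 (fun p : Σ i, M i => v p.1 p.2) := by
  obtain ⟨c, hc, hstable⟩ := hIBAP.exists_sqrt_sum_norm_sq_le
  exact isRieszFamily_sigma hv hc hstable hRiesz
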